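/- arXiv:2406.00325 — 5 statements merged into one kernel-verified Lean document; each statement's English description precedes it below -/
import Mathlib

section
/- Let X and Y be Banach spaces, F : X → Y a continuous map that is proper on closed bounded subsets (i.e., the preimage of every compact set intersected with every closed bounded set is compact), and Ψ : X → Y a completely continuous map (continuous, mapping bounded sets to relatively compact sets). Then F - Ψ is proper on closed bounded subsets of X. -/
open Bornology
open Pointwise

/-- A continuous map between Banach spaces that is proper on closed bounded sets remains
proper on closed bounded sets after a completely continuous perturbation. -/
theorem proper_on_closed_bounded_of_completelyContinuous_perturbation
    {X Y : Type*} [NormedAddCommGroup X] [NormedSpace ℝ X] [CompleteSpace X]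
    [NormedAddCommGroup Y] [NormedSpace ℝ Y] [CompleteSpace Y]
    (F Ψ : X → Y) (hF : Continuous F)
    (hFprop : ∀ (K : Set Y) (C : Set X), IsCompact K → IsClosed C → IsBounded C →
      IsCompact (F ⁻¹' K ∩ C))
    (hΨcont : Continuous Ψ)
    (hΨcc : ∀ B : Set X, IsBounded B → IsCompact (closure (Ψ '' B))) :
    ∀ (K : Set Y) (C : Set X), IsCompact K → IsClosed C → IsBounded C →
      IsCompact ((fun x => F x - Ψ x) ⁻¹' K ∩ C) := by
  intro K C hK hC hCb
  set L : Set Y := K + closure (Ψ '' C) with hL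
  have hLc : IsCompact L := hK.add (hΨcc C hCb)
  have hsub : (fun x => F x - Ψ x) ⁻¹' K ∩ C ⊆ F ⁻¹' L ∩ C := by
    rintro x ⟨hx, hxC⟩
    refine ⟨?_, hxC⟩
    have : F x = (F x - Ψ x) + Ψ x := by abel
    rw [Set.mem_preimage, this]
    exact Set.add_mem_add hx (subset_closure ⟨x, hxC, rfl⟩)
  have hclosed : IsClosed ((fun x => F x - Ψ x) ⁻¹' K ∩ C) :=
    (hK.isClosed.preimage (hF.sub hΨcont)).inter hC
  exact (hFprop L C hLc hC hCb).of_isClosed_subset hclosed hsub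
end

section
/- A closed, bounded, locally compact, star-shaped subset C of a real Banach space X is compact. -/
/-- A closed, bounded, locally compact, star-shaped subset of a real Banach space is compact. -/
theorem isCompact_of_closed_bounded_locallyCompact_starShaped
    {X : Type*} [NormedAddCommGroup X] [NormedSpace ℝ X] [CompleteSpace X]
    (C : Set X) (hclosed : IsClosed C) (hbdd : Bornology.IsBounded C)
    (hloc : LocallyCompactSpace C)
    (y : X) (hy : y ∈ C)
    (hstar : ∀ x ∈ C, ∀ t ∈ Set.Icc (0:ℝ) 1, y + t • (x - y) ∈ C) :
    IsCompact C := by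
  -- compact neighborhood of y inside C
  obtain ⟨K', hK'comp, hK'nhds⟩ := exists_compact_mem_nhds (⟨y, hy⟩ : C)
  rw [mem_nhds_subtype] at hK'nhds
  obtain ⟨U, hU, hUsub⟩ := hK'nhds
  obtain ⟨ε, hε, hball⟩ := Metric.mem_nhds_iff.mp hU
  -- K₀ := C ∩ closedBall y (ε/2) is compact
  have hKim : IsCompact (Subtype.val '' K') := hK'comp.image continuous_subtype_val
  have hsub : C ∩ Metric.closedBall y (ε / 2) ⊆ Subtype.val '' K' := by
    rintro x ⟨hxC, hxB⟩
    refine ⟨⟨x, hxC⟩, hUsub ?_, rfl⟩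
    exact hball (Metric.mem_closedBall.mp hxB |>.trans_lt (by linarith))
  have hK0 : IsCompact (C ∩ Metric.closedBall y (ε / 2)) :=
    hKim.of_isClosed_subset (hclosed.inter Metric.isClosed_closedBall) hsub
  -- bound on C
  obtain ⟨r, hr⟩ := hbdd.subset_closedBall y
  set M : ℝ := max r 1 with hM
  have hM1 : (0 : ℝ) < M := lt_of_lt_of_le one_pos (le_max_right _ _)
  have hxM : ∀ x ∈ C, ‖x - y‖ ≤ M := fun x hx =>
    (mem_closedBall_iff_norm.mp (hr hx)).trans (le_max_left _ _)
  set t : ℝ := min 1 (ε / 2 / M) with ht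
  have ht0 : 0 < t := lt_min one_pos (div_pos (by linarith) hM1)
  have ht1 : t ≤ 1 := min_le_left _ _
  -- the homothety image lies in K₀
  have hmap : ∀ x ∈ C, y + t • (x - y) ∈ C ∩ Metric.closedBall y (ε / 2) := by
    intro x hx
    refine ⟨hstar x hx t ⟨ht0.le, ht1⟩, ?_⟩
    rw [Metric.mem_closedBall, dist_eq_norm]
    have : y + t • (x - y) - y = t • (x - y) := by abel
    rw [this, norm_smul, Real.norm_eq_abs, abs_of_pos ht0]
    calc t * ‖x - y‖ ≤ (ε / 2 / M) * M :=
          mul_le_mul (min_le_right _ _) (hxM x hx) (norm_nonneg _)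
            (div_nonneg (by linarith) hM1.le)
      _ = ε / 2 := by field_simp
  -- inverse homothety
  set g : X → X := fun z => y + t⁻¹ • (z - y) with hg
  have hgc : Continuous g := by fun_prop
  have hCsub : C ⊆ g '' (C ∩ Metric.closedBall y (ε / 2)) := by
    intro x hx
    refine ⟨y + t • (x - y), hmap x hx, ?_⟩
    simp only [hg]
    rw [add_sub_cancel_left, smul_smul, inv_mul_cancel₀ ht0.ne', one_smul]
    abel
  exact (hK0.image hgc).of_isClosed_subset hclosed hCsub
end

section
/- Let h₀ : ℝⁿ → ℝⁿ be continuous with ⟨h₀(ξ), ξ⟩ > 0 for every ξ ≠ 0, and let φ : ℝⁿ → ℝⁿ be continuous with ⟨φ(ξ), ξ⟩ > 0 for every ξ ≠ 0 and φ(0) = 0. Then the only solution of the T-periodic problem (φ(x'))' = h₀(x), x(0)=x(T), x'(0)=x'(T), is the identically zero function x ≡ 0. -/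
open scoped RealInnerProductSpace
open Set Topology

/-!
Let `F(t) = ⟪φ(x'(t)), x(t)⟫`. Along a solution `F' = ⟪h₀(x), x⟫ + ⟪φ(x'), x'⟫ ≥ 0`, so `F` is
monotone on `[0, T]`, while periodicity gives `F(0) = F(T)`. Hence `F` is constant, `F' = 0`, and
both nonnegative terms vanish; the sign condition on `h₀` then forces `x = 0` on `(0, T)`, and by
continuity on `[0, T]`.
-/

lemma inner_apply_self_nonneg {E : Type*} [NormedAddCommGroup E] [InnerProductSpace ℝ E] {f : E → E}
    (hf : ∀ ξ, ξ ≠ 0 → 0 < ⟪f ξ, ξ⟫) (ξ : E) : 0 ≤ ⟪f ξ, ξ⟫ := by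
  rcases eq_or_ne ξ 0 with rfl | hξ
  · rw [inner_zero_right]
  · exact (hf ξ hξ).le

lemma MonotoneOn.eqOn_Icc_of_apply_eq {α β : Type*} [Preorder α] [PartialOrder β] {F : α → β}
    {a b : α} (hF : MonotoneOn F (Icc a b)) (hab : a ≤ b) (hFab : F a = F b) :
    EqOn F (fun _ ↦ F a) (Icc a b) := fun _ ht ↦
  le_antisymm (hFab ▸ hF ht (right_mem_Icc.2 hab) ht.2) (hF (left_mem_Icc.2 hab) ht ht.1)

lemma eq_zero_of_hasDerivAt_nonneg_of_apply_eq {F g : ℝ → ℝ} {a b : ℝ}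
    (hF : ContinuousOn F (Icc a b)) (hF' : ∀ t ∈ Ioo a b, HasDerivAt F (g t) t)
    (hg : ∀ t ∈ Ioo a b, 0 ≤ g t) (hFab : F a = F b) : ∀ t ∈ Ioo a b, g t = 0 := by
  intro t ht
  have hmono : MonotoneOn F (Icc a b) := by
    refine monotoneOn_of_hasDerivWithinAt_nonneg (f' := g) (convex_Icc a b) hF ?_ ?_ <;>
      rw [interior_Icc]
    · exact fun s hs ↦ (hF' s hs).hasDerivWithinAt
    · exact hg
  have hconst : F =ᶠ[𝓝 t] fun _ ↦ F a := by
    filter_upwards [Ioo_mem_nhds ht.1 ht.2] with s hs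
    exact hmono.eqOn_Icc_of_apply_eq (ht.1.trans ht.2).le hFab (Ioo_subset_Icc_self hs)
  exact (hF' t ht).unique ((hasDerivAt_const t (F a)).congr_of_eventuallyEq hconst)

theorem periodic_solution_eq_zero_of_sign_conditions_general (n : ℕ) (T : ℝ) (hT : 0 < T)
    (φ h₀ : EuclideanSpace ℝ (Fin n) → EuclideanSpace ℝ (Fin n))
    (hφpos : ∀ ξ : EuclideanSpace ℝ (Fin n), ξ ≠ 0 → 0 < ⟪φ ξ, ξ⟫)
    (hhc : Continuous h₀)
    (hhpos : ∀ ξ : EuclideanSpace ℝ (Fin n), ξ ≠ 0 → 0 < ⟪h₀ ξ, ξ⟫)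
    (x : ℝ → EuclideanSpace ℝ (Fin n)) (hx : ContDiff ℝ 1 x)
    (heq : ∀ t ∈ Set.Icc (0:ℝ) T,
      φ (deriv x t) = φ (deriv x 0) + ∫ τ in (0:ℝ)..t, h₀ (x τ))
    (hper : x 0 = x T) (hper' : deriv x 0 = deriv x T) :
    ∀ t ∈ Set.Icc (0:ℝ) T, x t = 0 := by
  have hxd : Differentiable ℝ x := hx.differentiable one_ne_zero
  -- `P` extends `φ ∘ x'` from `[0, T]` to a differentiable function on all of `ℝ`.
  set P : ℝ → EuclideanSpace ℝ (Fin n) := fun u ↦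
    φ (deriv x 0) + ∫ τ in (0:ℝ)..u, h₀ (x τ)
  have hP (t : ℝ) (ht : t ∈ Icc 0 T) : P t = φ (deriv x t) := (heq t ht).symm
  have hF' (t : ℝ) :
      HasDerivAt (fun u ↦ ⟪P u, x u⟫) (⟪P t, deriv x t⟫ + ⟪h₀ (x t), x t⟫) t :=
    ((((hhc.comp hxd.continuous).integral_hasStrictDerivAt 0 t).hasDerivAt).const_add _).inner ℝ
      (hxd t).hasDerivAt
  have hFper : ⟪P 0, x 0⟫ = ⟪P T, x T⟫ := by
    rw [hP 0 (left_mem_Icc.2 hT.le), hP T (right_mem_Icc.2 hT.le), hper, hper']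
  have hnonneg (t : ℝ) (ht : t ∈ Ioo 0 T) :
      0 ≤ ⟪P t, deriv x t⟫ ∧ 0 ≤ ⟪h₀ (x t), x t⟫ := by
    rw [hP t (Ioo_subset_Icc_self ht)]
    exact ⟨inner_apply_self_nonneg hφpos _, inner_apply_self_nonneg hhpos _⟩
  have hzero : EqOn x 0 (Ioo 0 T) := fun t ht ↦ by
    have hsum := eq_zero_of_hasDerivAt_nonneg_of_apply_eq
      (fun u _ ↦ (hF' u).continuousAt.continuousWithinAt) (fun u _ ↦ hF' u)
      (fun u hu ↦ add_nonneg (hnonneg u hu).1 (hnonneg u hu).2) hFper t ht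
    have hh₀ : ⟪h₀ (x t), x t⟫ = 0 :=
      ((add_eq_zero_iff_of_nonneg (hnonneg t ht).1 (hnonneg t ht).2).1 hsum).2
    by_contra hxt
    exact (hhpos _ hxt).ne' hh₀
  rw [← closure_Ioo hT.ne]
  exact hzero.closure hxd.continuous continuous_const

/-- If `⟨h₀(ξ),ξ⟩ > 0` and `⟨φ(ξ),ξ⟩ > 0` for `ξ ≠ 0`, with `φ(0) = 0`, then the only
`T`-periodic solution of `(φ(x'))' = h₀(x)` is `x ≡ 0`. The equation is written in the
equivalent integrated form `φ(x'(t)) = φ(x'(0)) + ∫₀ᵗ h₀(x(τ)) dτ`. -/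
theorem periodic_solution_eq_zero_of_sign_conditions (n : ℕ) (T : ℝ) (hT : 0 < T)
    (φ h₀ : EuclideanSpace ℝ (Fin n) → EuclideanSpace ℝ (Fin n))
    (hφc : Continuous φ) (hφ0 : φ 0 = 0)
    (hφpos : ∀ ξ : EuclideanSpace ℝ (Fin n), ξ ≠ 0 → 0 < ⟪φ ξ, ξ⟫)
    (hhc : Continuous h₀)
    (hhpos : ∀ ξ : EuclideanSpace ℝ (Fin n), ξ ≠ 0 → 0 < ⟪h₀ ξ, ξ⟫)
    (x : ℝ → EuclideanSpace ℝ (Fin n)) (hx : ContDiff ℝ 1 x)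
    (heq : ∀ t ∈ Set.Icc (0:ℝ) T,
      φ (deriv x t) = φ (deriv x 0) + ∫ τ in (0:ℝ)..t, h₀ (x τ))
    (hper : x 0 = x T) (hper' : deriv x 0 = deriv x T) :
    ∀ t ∈ Set.Icc (0:ℝ) T, x t = 0 :=
  periodic_solution_eq_zero_of_sign_conditions_general n T hT φ h₀ hφpos hhc hhpos x hx heq hper
    hper'
end

section
/- Let h₀ = (𝔥₁,…,𝔥ₙ) : ℝⁿ → ℝⁿ be continuous, e : [0,T] → ℝⁿ integrable, and suppose for some index i the component 𝔥ᵢ is bounded on ℝⁿ and ∫₀ᵀ eᵢ(t) dt ≠ 0. If (λ, x) is a solution pair of the T-periodic problem (φ(x'))' = λ (d/dt)∇G(x) + h₀(x) + λ e(t) with periodic boundary conditions (φ a homeomorphism of ℝⁿ, G of class C²), then |λ| ≤ T·sup|𝔥ᵢ| / |∫₀ᵀ eᵢ(t) dt|. -/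
open scoped RealInnerProductSpace

/-- A priori bound on the parameter `λ`: if the `i`-th component of `h₀` is bounded by `M`
and `∫₀ᵀ eᵢ ≠ 0`, then any solution pair `(λ, x)` of the `T`-periodic problem
`(φ(x'))' = λ (d/dt)∇G(x) + h₀(x) + λ e(t)` (written in integrated form) satisfies
`|λ| ≤ T·M / |∫₀ᵀ eᵢ|`. Components are extracted by the inner product with the basis
vector `EuclideanSpace.single i 1`. -/
theorem abs_lambda_le_of_bounded_component (n : ℕ) (T : ℝ) (hT : 0 < T)
    (φ : EuclideanSpace ℝ (Fin n) ≃ₜ EuclideanSpace ℝ (Fin n))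
    (G : EuclideanSpace ℝ (Fin n) → ℝ) (hG : ContDiff ℝ 2 G)
    (h₀ : EuclideanSpace ℝ (Fin n) → EuclideanSpace ℝ (Fin n)) (hh : Continuous h₀)
    (e : ℝ → EuclideanSpace ℝ (Fin n))
    (he : IntervalIntegrable e MeasureTheory.volume 0 T)
    (i : Fin n) (M : ℝ)
    (hM : ∀ ξ : EuclideanSpace ℝ (Fin n), |⟪h₀ ξ, EuclideanSpace.single i (1:ℝ)⟫| ≤ M)
    (hei : (∫ t in (0:ℝ)..T, ⟪e t, EuclideanSpace.single i (1:ℝ)⟫) ≠ 0)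
    (lam : ℝ) (x : ℝ → EuclideanSpace ℝ (Fin n)) (hx : ContDiff ℝ 1 x)
    (heq : ∀ t ∈ Set.Icc (0:ℝ) T,
      φ (deriv x t) = φ (deriv x 0) + lam • (gradient G (x t) - gradient G (x 0))
        + ∫ τ in (0:ℝ)..t, (h₀ (x τ) + lam • e τ))
    (hper : x 0 = x T) (hper' : deriv x 0 = deriv x T) :
    |lam| ≤ T * M / |∫ t in (0:ℝ)..T, ⟪e t, EuclideanSpace.single i (1:ℝ)⟫| := by
  set v := EuclideanSpace.single i (1:ℝ) with hv
  have hxc : Continuous fun τ => h₀ (x τ) := hh.comp hx.continuous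
  have hhi : IntervalIntegrable (fun τ => h₀ (x τ)) MeasureTheory.volume 0 T :=
    hxc.intervalIntegrable 0 T
  have hint : (∫ τ in (0:ℝ)..T, (h₀ (x τ) + lam • e τ)) = 0 := by
    have h := heq T (Set.right_mem_Icc.2 hT.le)
    rw [← hper', ← hper] at h
    simpa using h.symm
  have hsplit : (∫ τ in (0:ℝ)..T, (h₀ (x τ) + lam • e τ))
      = (∫ τ in (0:ℝ)..T, h₀ (x τ)) + lam • (∫ τ in (0:ℝ)..T, e τ) := by
    have := intervalIntegral.integral_add hhi (he.smul lam)
    simpa [intervalIntegral.integral_smul] using this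
  have hIv : (∫ τ in (0:ℝ)..T, ⟪h₀ (x τ), v⟫) + lam * (∫ τ in (0:ℝ)..T, ⟪e τ, v⟫) = 0 := by
    have h1 : (∫ τ in (0:ℝ)..T, ⟪h₀ (x τ), v⟫) = ⟪(∫ τ in (0:ℝ)..T, h₀ (x τ)), v⟫ := by
      calc (∫ τ in (0:ℝ)..T, ⟪h₀ (x τ), v⟫)
          = ∫ τ in (0:ℝ)..T, innerSL ℝ v (h₀ (x τ)) :=
            intervalIntegral.integral_congr fun τ _ => real_inner_comm _ _
        _ = innerSL ℝ v (∫ τ in (0:ℝ)..T, h₀ (x τ)) :=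
            (innerSL ℝ v).intervalIntegral_comp_comm hhi
        _ = ⟪(∫ τ in (0:ℝ)..T, h₀ (x τ)), v⟫ := by rw [innerSL_apply_apply]; exact real_inner_comm _ _
    have h2 : (∫ τ in (0:ℝ)..T, ⟪e τ, v⟫) = ⟪(∫ τ in (0:ℝ)..T, e τ), v⟫ := by
      calc (∫ τ in (0:ℝ)..T, ⟪e τ, v⟫)
          = ∫ τ in (0:ℝ)..T, innerSL ℝ v (e τ) :=
            intervalIntegral.integral_congr fun τ _ => real_inner_comm _ _
        _ = innerSL ℝ v (∫ τ in (0:ℝ)..T, e τ) :=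
            (innerSL ℝ v).intervalIntegral_comp_comm he
        _ = ⟪(∫ τ in (0:ℝ)..T, e τ), v⟫ := by rw [innerSL_apply_apply]; exact real_inner_comm _ _
    rw [h1, h2, ← real_inner_smul_left, ← inner_add_left, ← hsplit, hint, inner_zero_left]
  have hbound : |∫ τ in (0:ℝ)..T, ⟪h₀ (x τ), v⟫| ≤ T * M := by
    have h3 := intervalIntegral.norm_integral_le_of_norm_le_const
      (a := 0) (b := T) (C := M) (f := fun τ => ⟪h₀ (x τ), v⟫)
      (fun t _ => by simpa using hM (x t))
    simp only [Real.norm_eq_abs, sub_zero, abs_of_pos hT] at h3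
    linarith
  have key : |lam| * |∫ t in (0:ℝ)..T, ⟪e t, v⟫| ≤ T * M := by
    rw [← abs_mul]
    have : lam * (∫ t in (0:ℝ)..T, ⟪e t, v⟫) = -(∫ τ in (0:ℝ)..T, ⟪h₀ (x τ), v⟫) := by
      linarith [hIv]
    rw [this, abs_neg]
    exact hbound
  rw [le_div_iff₀ (abs_pos.2 hei)]
  exact key
end

section
/- Let F : I × [0,T] × ℝⁿ → ℝⁿ be a Carathéodory function with ⟨F(λ,t,x), x⟩ > 0 for every λ, a.e. t, and all x with ‖x‖ ≥ R, and let φ : ℝⁿ → ℝⁿ satisfy ⟨φ(ξ),ξ⟩ ≥ 0 for all ξ. If x is a T-periodic solution of (φ(x'))' = F(λ,t,x), then there exists t̃ ∈ [0,T] with ‖x(t̃)‖ < R. -/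
/-!
If `‖x t‖ ≥ R` on all of `[0, T]`, the sign condition makes `∫ ⟪F(λ, t, x t), x t⟫` positive.
Testing the equation against `x` and integrating by parts, periodicity kills the boundary terms,
so the same integral equals `-∫ ⟪φ (x' t), x' t⟫ ≤ 0`. As `φ ∘ x'` is only absolutely continuous,
the integration by parts is done coordinatewise in an orthonormal basis, where it reduces to the
one for absolutely continuous real functions.
-/

open MeasureTheory Set intervalIntegral
open scoped RealInnerProductSpace

theorem intervalIntegral_pos_of_ae_pos {f : ℝ → ℝ} {a b : ℝ} (hab : a < b)
    (hfi : IntervalIntegrable f volume a b) (hpos : ∀ᵐ t ∂volume.restrict (Ioc a b), 0 < f t) :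
    0 < ∫ t in a..b, f t := by
  refine (integral_lt_integral_of_ae_le_of_measure_setOfPred_lt_ne_zero hab.le
    intervalIntegrable_const hfi (hpos.mono fun _ ht => ht.le) fun hnull => ?_).trans_eq' (by simp)
  have : (ae (volume.restrict (Ioc a b))).NeBot := ae_neBot.2 (by simp [hab])
  obtain ⟨t, htpos, htnot⟩ := (hpos.and (measure_eq_zero_iff_ae_notMem.1 hnull)).exists
  exact htnot htpos

theorem integral_primitive_mul_deriv {f g : ℝ → ℝ} {a b : ℝ}
    (hf : IntervalIntegrable f volume a b) (hg : ContDiff ℝ 1 g) :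
    ∫ t in a..b, (∫ τ in a..t, f τ) * deriv g t =
      (∫ τ in a..b, f τ) * g b - ∫ t in a..b, f t * g t := by
  have hP := hf.absolutelyContinuousOnInterval_intervalIntegral left_mem_uIcc
  rw [hP.integral_mul_deriv_eq_deriv_mul hg.contDiffOn.absolutelyContinuousOnInterval,
    integral_same, zero_mul, sub_zero]
  congr 1
  refine integral_congr_ae ?_
  filter_upwards [hf.ae_hasDerivAt_integral] with t ht htI
  rw [(ht (uIoc_subset_uIcc htI) a left_mem_uIcc).deriv]

variable {E : Type*} [NormedAddCommGroup E] [InnerProductSpace ℝ E]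

theorem IntervalIntegrable.const_inner {f : ℝ → E} {a b : ℝ}
    (hf : IntervalIntegrable f volume a b) (c : E) :
    IntervalIntegrable (fun t => ⟪c, f t⟫) volume a b :=
  ⟨hf.1.const_inner c, hf.2.const_inner c⟩

theorem intervalIntegral.integral_const_inner [CompleteSpace E] {f : ℝ → E} {a b : ℝ}
    (hf : IntervalIntegrable f volume a b) (c : E) :
    ∫ t in a..b, ⟪c, f t⟫ = ⟪c, ∫ t in a..b, f t⟫ :=
  (innerSL ℝ c).intervalIntegral_comp_comm hf

theorem OrthonormalBasis.inner_eq_sum_inner_mul_inner {ι : Type*} [Fintype ι]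
    (e : OrthonormalBasis ι ℝ E) (u v : E) :
    ⟪u, v⟫ = ∑ i, ⟪e i, u⟫ * ⟪e i, v⟫ := by
  rw [← e.sum_inner_mul_inner]
  simp only [real_inner_comm u]

variable [FiniteDimensional ℝ E]

theorem IntervalIntegrable.inner_continuousOn {f g : ℝ → E} {a b : ℝ}
    (hf : IntervalIntegrable f volume a b) (hg : ContinuousOn g (uIcc a b)) :
    IntervalIntegrable (fun t => ⟪f t, g t⟫) volume a b := by
  let e := stdOrthonormalBasis ℝ E
  rw [show (fun t => ⟪f t, g t⟫) = fun t => ∑ i, ⟪e i, f t⟫ * ⟪e i, g t⟫ from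
    funext fun t => e.inner_eq_sum_inner_mul_inner _ _]
  simpa only [Finset.sum_fn] using IntervalIntegrable.sum Finset.univ fun i _ =>
    (hf.const_inner (e i)).mul_continuousOn (continuousOn_const.inner hg)

theorem integral_inner_primitive_deriv {f g : ℝ → E} {a b : ℝ}
    (hf : IntervalIntegrable f volume a b) (hg : ContDiff ℝ 1 g) :
    ∫ t in a..b, ⟪∫ τ in a..t, f τ, deriv g t⟫ =
      ⟪∫ τ in a..b, f τ, g b⟫ - ∫ t in a..b, ⟪f t, g t⟫ := by
  let e := stdOrthonormalBasis ℝ E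
  have hg' : Continuous (deriv g) := hg.continuous_deriv le_rfl
  have hderiv (i) (t : ℝ) : deriv (fun s => ⟪e i, g s⟫) t = ⟪e i, deriv g t⟫ := by
    rw [deriv_inner_apply ℝ (differentiableAt_const _) (hg.differentiable one_ne_zero t)]
    simp
  have hprimitive (i) {t} (ht : t ∈ uIcc a b) :
      ∫ τ in a..t, ⟪e i, f τ⟫ = ⟪e i, ∫ τ in a..t, f τ⟫ :=
    integral_const_inner (hf.mono_set (uIcc_subset_uIcc_left ht)) _
  calc ∫ t in a..b, ⟪∫ τ in a..t, f τ, deriv g t⟫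
      = ∫ t in a..b, ∑ i, (∫ τ in a..t, ⟪e i, f τ⟫) * deriv (fun s => ⟪e i, g s⟫) t :=
        integral_congr fun t ht => by
          simp only [e.inner_eq_sum_inner_mul_inner (∫ τ in a..t, f τ), hprimitive _ ht, hderiv]
    _ = ∑ i, ∫ t in a..b, (∫ τ in a..t, ⟪e i, f τ⟫) * deriv (fun s => ⟪e i, g s⟫) t := by
        refine integral_finsetSum fun i _ => ContinuousOn.intervalIntegrable ?_
        simp only [hderiv]
        exact (continuousOn_primitive_interval' (hf.const_inner _) left_mem_uIcc).mul
          (continuous_const.inner hg').continuousOn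
    _ = ∑ i, ((∫ τ in a..b, ⟪e i, f τ⟫) * ⟪e i, g b⟫ -
          ∫ t in a..b, ⟪e i, f t⟫ * ⟪e i, g t⟫) :=
        Finset.sum_congr rfl fun i _ =>
          integral_primitive_mul_deriv (hf.const_inner _) (contDiff_const.inner ℝ hg)
    _ = ⟪∫ τ in a..b, f τ, g b⟫ - ∫ t in a..b, ⟪f t, g t⟫ := by
        rw [Finset.sum_sub_distrib, ← integral_finsetSum fun i _ =>
          (hf.const_inner (e i)).mul_continuousOn
            (continuousOn_const.inner hg.continuous.continuousOn)]
        simp only [hprimitive _ right_mem_uIcc, ← e.inner_eq_sum_inner_mul_inner]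

theorem integral_inner_deriv_eq_neg_of_periodic {f ψ x : ℝ → E} {a b : ℝ} (hab : a ≤ b)
    (hf : IntervalIntegrable f volume a b) (hx : ContDiff ℝ 1 x)
    (hψ : ∀ t ∈ Icc a b, ψ t = ψ a + ∫ τ in a..t, f τ) (hxper : x a = x b) (hψper : ψ a = ψ b) :
    ∫ t in a..b, ⟪ψ t, deriv x t⟫ = -∫ t in a..b, ⟪f t, x t⟫ := by
  have hx' : Continuous (deriv x) := hx.continuous_deriv le_rfl
  have hf_zero : ∫ τ in a..b, f τ = 0 := by
    simpa [← hψper] using (hψ b (right_mem_Icc.2 hab)).symm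
  have hconst : ∫ t in a..b, ⟪ψ a, deriv x t⟫ = 0 := by
    rw [integral_const_inner (hx'.intervalIntegrable a b), integral_deriv_eq_sub
      (fun t _ => hx.differentiable one_ne_zero t) (hx'.intervalIntegrable a b), hxper, sub_self,
      inner_zero_right]
  calc ∫ t in a..b, ⟪ψ t, deriv x t⟫
      = ∫ t in a..b, ⟪ψ a, deriv x t⟫ + ⟪∫ τ in a..t, f τ, deriv x t⟫ := by
        refine integral_congr fun t ht => ?_
        rw [uIcc_of_le hab] at ht
        simp only [hψ t ht, inner_add_left]
    _ = -∫ t in a..b, ⟪f t, x t⟫ := by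
        rw [integral_add ((continuous_const.inner hx').intervalIntegrable a b)
          ((continuousOn_primitive_interval' hf left_mem_uIcc).inner
            hx'.continuousOn).intervalIntegrable,
          hconst, integral_inner_primitive_deriv hf hx, hf_zero, inner_zero_left, zero_add,
          zero_sub]

/-- If `⟨F(λ,t,x),x⟩ > 0` for a.e. `t` whenever `‖x‖ ≥ R`, and `⟨φ(ξ),ξ⟩ ≥ 0`, then any
`T`-periodic solution `x` of `(φ(x'))' = F(λ,t,x)` (written in integrated form) enters the
ball of radius `R`: there exists `t̃ ∈ [0,T]` with `‖x(t̃)‖ < R`. -/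
theorem exists_point_in_ball_of_periodic_solution (n : ℕ) (T : ℝ) (hT : 0 < T) (R : ℝ)
    (φ : EuclideanSpace ℝ (Fin n) → EuclideanSpace ℝ (Fin n))
    (hφ : ∀ ξ : EuclideanSpace ℝ (Fin n), 0 ≤ ⟪φ ξ, ξ⟫)
    (F : ℝ → ℝ → EuclideanSpace ℝ (Fin n) → EuclideanSpace ℝ (Fin n)) (lam : ℝ)
    (hsign : ∀ᵐ t ∂(MeasureTheory.volume.restrict (Set.Icc (0:ℝ) T)),
      ∀ ξ : EuclideanSpace ℝ (Fin n), R ≤ ‖ξ‖ → 0 < ⟪F lam t ξ, ξ⟫)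
    (x : ℝ → EuclideanSpace ℝ (Fin n)) (hx : ContDiff ℝ 1 x)
    (hFi : IntervalIntegrable (fun τ => F lam τ (x τ)) MeasureTheory.volume 0 T)
    (heq : ∀ t ∈ Set.Icc (0:ℝ) T,
      φ (deriv x t) = φ (deriv x 0) + ∫ τ in (0:ℝ)..t, F lam τ (x τ))
    (hper : x 0 = x T) (hper' : deriv x 0 = deriv x T) :
    ∃ t ∈ Set.Icc (0:ℝ) T, ‖x t‖ < R := by
  by_contra! hR
  have hforce : 0 < ∫ t in 0..T, ⟪F lam t (x t), x t⟫ := by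
    refine intervalIntegral_pos_of_ae_pos hT (hFi.inner_continuousOn hx.continuous.continuousOn) ?_
    filter_upwards [ae_restrict_of_ae_restrict_of_subset Ioc_subset_Icc_self hsign,
      ae_restrict_mem measurableSet_Ioc] with t hsign_t ht
    exact hsign_t _ (hR t (Ioc_subset_Icc_self ht))
  have henergy : 0 ≤ ∫ t in 0..T, ⟪φ (deriv x t), deriv x t⟫ :=
    integral_nonneg hT.le fun t _ => hφ _
  rw [integral_inner_deriv_eq_neg_of_periodic hT.le hFi hx heq hper (congrArg φ hper')] at henergy
  linarith
end
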